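/- For Z ∈ Mat(n,ℍ) written as Z = A + jB, the complex determinant of σ(Z) = [[A, -conj(B)],[B, conj(A)]] is a nonnegative real number; consequently the Study determinant S.det(Z) := |det σ(Z)|² defines a monoid homomorphism Mat(n,ℍ) → ℝ≥0 whose restriction to GL(n,ℍ) is a group homomorphism onto the positive reals. -/

import Mathlib

/-!
By its defining formula `σ` is a ring homomorphism, so `det ∘ σ` is multiplicative. Gaussian
elimination over `ℍ` around a nonzero pivot `u` writes `Z`, after reindexing, as
(lower unipotent) · diag(u, W) · (upper unipotent). The unipotent factors go to `1 + N` with `N`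
nilpotent, of determinant `1`, and `det σ(u) = |u|²`; by induction on the size, `det σ(Z)` is a
product of such `|u|²`. This is a nonnegative element of `ℂ` for its partial order, which says at
once that it is real and nonnegative.
-/

open Matrix
open scoped ComplexOrder ComplexConjugate

namespace Quaternion

/- `q = coeffA q + j * coeffB q` with `coeffA q, coeffB q ∈ ℂ = ℝ + ℝi`, matching `Z = A + jB`;
the sign in `coeffB` comes from `j * i = -k`. -/
def coeffA : ℍ[ℝ] →+ ℂ where
  toFun q := ⟨q.re, q.imI⟩
  map_zero' := rfl
  map_add' _ _ := rfl

def coeffB : ℍ[ℝ] →+ ℂ where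
  toFun q := ⟨q.imJ, -q.imK⟩
  map_zero' := by apply Complex.ext <;> simp
  map_add' _ _ := by apply Complex.ext <;> simp; ring

@[simp] lemma coeffA_re (q : ℍ[ℝ]) : (coeffA q).re = q.re := rfl
@[simp] lemma coeffA_im (q : ℍ[ℝ]) : (coeffA q).im = q.imI := rfl
@[simp] lemma coeffB_re (q : ℍ[ℝ]) : (coeffB q).re = q.imJ := rfl
@[simp] lemma coeffB_im (q : ℍ[ℝ]) : (coeffB q).im = -q.imK := rfl

@[simp] lemma coeffA_one : coeffA 1 = 1 := by apply Complex.ext <;> simp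
@[simp] lemma coeffB_one : coeffB 1 = 0 := by apply Complex.ext <;> simp

lemma coeffA_mul (p q : ℍ[ℝ]) :
    coeffA (p * q) = coeffA p * coeffA q - conj (coeffB p) * coeffB q := by
  apply Complex.ext <;> simp <;> ring

lemma coeffB_mul (p q : ℍ[ℝ]) :
    coeffB (p * q) = coeffB p * coeffA q + conj (coeffA p) * coeffB q := by
  apply Complex.ext <;> simp <;> ring

lemma mk_coeffA_coeffB (q : ℍ[ℝ]) :
    (⟨(coeffA q).re, (coeffA q).im, (coeffB q).re, -(coeffB q).im⟩ : ℍ[ℝ]) = q := by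
  ext <;> simp

lemma normSq_eq_normSq_coeffA_add_normSq_coeffB (q : ℍ[ℝ]) :
    normSq q = Complex.normSq (coeffA q) + Complex.normSq (coeffB q) := by
  simp [normSq_def', Complex.normSq_apply]; ring

end Quaternion

namespace Matrix

open Quaternion

variable {k l m : Type*} [Fintype k] [DecidableEq k]

def symplecticRep : Matrix k k ℍ[ℝ] →+* Matrix (k ⊕ k) (k ⊕ k) ℂ where
  toFun Z := fromBlocks (Z.map coeffA) (-(Z.map coeffB).map conj)
    (Z.map coeffB) ((Z.map coeffA).map conj)
  map_one' := by
    rw [← fromBlocks_one]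
    congr 1 <;> ext i j <;> by_cases h : i = j <;> simp [one_apply, h]
  map_mul' Z W := by
    simp only [fromBlocks_multiply]
    congr 1 <;> ext i j <;>
      simp [mul_apply, map_sum, coeffA_mul, coeffB_mul, Finset.sum_add_distrib,
        Finset.sum_sub_distrib] <;> abel
  map_zero' := by simp
  map_add' Z W := by
    simp only [fromBlocks_add]
    congr 1 <;> ext <;> simp [add_comm]

lemma det_one_add_of_isNilpotent {R n : Type*} [CommRing R] [IsDomain R] [Fintype n]
    [DecidableEq n] {N : Matrix n n R} (hN : IsNilpotent N) : (1 + N).det = 1 := by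
  have hchar := (isNilpotent_charpoly_sub_pow_of_isNilpotent hN.neg).eq_zero
  rw [sub_eq_zero] at hchar
  simpa [hchar, sub_eq_add_neg] using (eval_charpoly (-N) 1).symm

lemma det_symplecticRep_one_add_of_mul_self_eq_zero {N : Matrix k k ℍ[ℝ]} (hN : N * N = 0) :
    (symplecticRep (1 + N)).det = 1 := by
  rw [map_add, map_one]
  exact det_one_add_of_isNilpotent ⟨2, by rw [sq, ← map_mul, hN, map_zero]⟩

variable [Fintype l] [DecidableEq l] [Fintype m] [DecidableEq m]

lemma symplecticRep_submatrix (e : l ≃ k) (Z : Matrix k k ℍ[ℝ]) :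
    symplecticRep (Z.submatrix e e) =
      (symplecticRep Z).submatrix (Equiv.sumCongr e e) (Equiv.sumCongr e e) := by
  ext (i | i) (j | j) <;> rfl

lemma det_symplecticRep_submatrix (e : l ≃ k) (Z : Matrix k k ℍ[ℝ]) :
    (symplecticRep (Z.submatrix e e)).det = (symplecticRep Z).det := by
  rw [symplecticRep_submatrix, det_submatrix_equiv_self]

lemma symplecticRep_fromBlocks_zero₁₂_zero₂₁ (A : Matrix m m ℍ[ℝ]) (D : Matrix l l ℍ[ℝ]) :
    (symplecticRep (fromBlocks A 0 0 D)).submatrix (Equiv.sumSumSumComm m m l l)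
        (Equiv.sumSumSumComm m m l l) =
      fromBlocks (symplecticRep A) 0 0 (symplecticRep D) := by
  ext ((i | i) | (i | i)) ((j | j) | (j | j)) <;> simp [symplecticRep]

lemma det_symplecticRep_fromBlocks_zero₁₂_zero₂₁ (A : Matrix m m ℍ[ℝ]) (D : Matrix l l ℍ[ℝ]) :
    (symplecticRep (fromBlocks A 0 0 D)).det = (symplecticRep A).det * (symplecticRep D).det := by
  rw [← det_submatrix_equiv_self (Equiv.sumSumSumComm m m l l),
    symplecticRep_fromBlocks_zero₁₂_zero₂₁, det_fromBlocks_zero₁₂]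

lemma det_symplecticRep_fromBlocks_zero₁₂_one (C : Matrix l m ℍ[ℝ]) :
    (symplecticRep (fromBlocks (1 : Matrix m m ℍ[ℝ]) 0 C 1)).det = 1 := by
  have hsplit :
      fromBlocks 1 0 C 1 = (1 : Matrix (m ⊕ l) (m ⊕ l) ℍ[ℝ]) + fromBlocks 0 0 C 0 := by
    rw [← fromBlocks_one, fromBlocks_add]; simp
  rw [hsplit]
  exact det_symplecticRep_one_add_of_mul_self_eq_zero (by simp [fromBlocks_multiply])

lemma det_symplecticRep_fromBlocks_zero₂₁_one (B : Matrix m l ℍ[ℝ]) :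
    (symplecticRep (fromBlocks 1 B 0 (1 : Matrix l l ℍ[ℝ]))).det = 1 := by
  have hsplit :
      fromBlocks 1 B 0 1 = (1 : Matrix (m ⊕ l) (m ⊕ l) ℍ[ℝ]) + fromBlocks 0 B 0 0 := by
    rw [← fromBlocks_one, fromBlocks_add]; simp
  rw [hsplit]
  exact det_symplecticRep_one_add_of_mul_self_eq_zero (by simp [fromBlocks_multiply])

lemma det_symplecticRep_fromBlocks (A A' : Matrix m m ℍ[ℝ]) (B : Matrix m l ℍ[ℝ])
    (C : Matrix l m ℍ[ℝ]) (D : Matrix l l ℍ[ℝ]) (hA'A : A' * A = 1) (hAA' : A * A' = 1) :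
    (symplecticRep (fromBlocks A B C D)).det =
      (symplecticRep A).det * (symplecticRep (D - C * A' * B)).det := by
  have hfactor : fromBlocks A B C D =
      fromBlocks 1 0 (C * A') 1 * fromBlocks A 0 0 (D - C * A' * B) *
        fromBlocks 1 (A' * B) 0 1 := by
    simp [fromBlocks_multiply, Matrix.mul_assoc, hA'A, ← Matrix.mul_assoc A A', hAA']
  rw [hfactor, map_mul, map_mul, det_mul, det_mul, det_symplecticRep_fromBlocks_zero₁₂_one,
    det_symplecticRep_fromBlocks_zero₂₁_one, det_symplecticRep_fromBlocks_zero₁₂_zero₂₁,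
    one_mul, mul_one]

lemma det_symplecticRep_of_unique [Unique m] (A : Matrix m m ℍ[ℝ]) :
    (symplecticRep A).det = Quaternion.normSq (A default default) := by
  let e : Fin 2 ≃ m ⊕ m := (finSumFinEquiv (m := 1) (n := 1)).symm.trans
    (Equiv.sumCongr (Equiv.ofUnique _ m) (Equiv.ofUnique _ m))
  have he0 : e 0 = Sum.inl default := rfl
  have he1 : e 1 = Sum.inr default := rfl
  rw [← det_submatrix_equiv_self e, det_fin_two, normSq_eq_normSq_coeffA_add_normSq_coeffB]
  simp only [submatrix_apply, he0, he1, symplecticRep, RingHom.coe_mk, MonoidHom.coe_mk,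
    OneHom.coe_mk, fromBlocks_apply₁₁, fromBlocks_apply₁₂, fromBlocks_apply₂₁,
    fromBlocks_apply₂₂, map_apply, neg_apply]
  push_cast
  rw [← Complex.mul_conj, ← Complex.mul_conj]
  ring

lemma exists_det_symplecticRep_eq_normSq_mul {x : k} (Z : Matrix k k ℍ[ℝ]) (hx : Z x x ≠ 0) :
    ∃ W : Matrix {i // i ≠ x} {i // i ≠ x} ℍ[ℝ],
      (symplecticRep Z).det = Quaternion.normSq (Z x x) * (symplecticRep W).det := by
  let e := Equiv.sumCompl (· = x)
  let Z' := Z.submatrix e e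
  let A' : Matrix {i // i = x} {i // i = x} ℍ[ℝ] := of fun _ _ => (Z x x)⁻¹
  have hA : Z'.toBlocks₁₁ = of fun _ _ => Z x x := by
    ext ⟨i, rfl⟩ ⟨j, rfl⟩ : 1; rfl
  have hA'A : A' * Z'.toBlocks₁₁ = 1 := by
    ext ⟨i, rfl⟩ ⟨j, rfl⟩ : 1; simp [hA, A', mul_apply, hx]
  have hAA' : Z'.toBlocks₁₁ * A' = 1 := by
    ext ⟨i, rfl⟩ ⟨j, rfl⟩ : 1; simp [hA, A', mul_apply, hx]
  refine ⟨Z'.toBlocks₂₂ - Z'.toBlocks₂₁ * A' * Z'.toBlocks₁₂, ?_⟩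
  conv_lhs => rw [← det_symplecticRep_submatrix e, ← fromBlocks_toBlocks (Z.submatrix e e)]
  rw [det_symplecticRep_fromBlocks _ A' _ _ _ hA'A hAA', hA, det_symplecticRep_of_unique]
  rfl

lemma exists_det_symplecticRep_eq_and_apply_self_ne_zero {i x : k} (Z : Matrix k k ℍ[ℝ])
    (hi : Z i x ≠ 0) :
    ∃ Z' : Matrix k k ℍ[ℝ], (symplecticRep Z').det = (symplecticRep Z).det ∧ Z' x x ≠ 0 := by
  by_cases hxx : Z x x = 0
  · have hix : x ≠ i := by rintro rfl; exact hi hxx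
    refine ⟨(1 + single x i 1) * Z, ?_, ?_⟩
    · rw [map_mul, det_mul, det_symplecticRep_one_add_of_mul_self_eq_zero
        (single_mul_single_of_ne 1 x i x hix.symm 1), one_mul]
    · simpa [add_mul, hxx] using hi
  · exact ⟨Z, rfl, hxx⟩

theorem det_symplecticRep_nonneg (Z : Matrix k k ℍ[ℝ]) : 0 ≤ (symplecticRep Z).det := by
  induction h : Fintype.card k using Nat.strong_induction_on generalizing k with
  | _ N ih =>
    rcases isEmpty_or_nonempty k with _ | ⟨⟨x⟩⟩
    · simp
    by_cases hcol : ∀ i, Z i x = 0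
    · rw [det_eq_zero_of_column_eq_zero (Sum.inl x) fun i => by
        rcases i with i | i <;> simp [symplecticRep, hcol]]
    push Not at hcol
    obtain ⟨i, hi⟩ := hcol
    obtain ⟨Z', hZ', hxx⟩ := exists_det_symplecticRep_eq_and_apply_self_ne_zero Z hi
    obtain ⟨W, hW⟩ := exists_det_symplecticRep_eq_normSq_mul Z' hxx
    have hcard : Fintype.card {i // i ≠ x} < N := by
      have := Fintype.card_pos_iff.2 ⟨x⟩
      rw [Fintype.card_subtype_compl, Fintype.card_subtype_eq]
      omega
    rw [← hZ', hW]
    exact mul_nonneg (by exact_mod_cast Quaternion.normSq_nonneg) (ih _ hcard W rfl)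

end Matrix

open Quaternion Matrix

theorem study_determinant_general
    (n : ℕ) (hn : 1 ≤ n)
    (σ : Matrix (Fin n) (Fin n) (Quaternion ℝ) →ₐ[ℝ]
      Matrix (Fin n ⊕ Fin n) (Fin n ⊕ Fin n) ℂ)
    (hσ : ∀ A B : Matrix (Fin n) (Fin n) ℂ,
      σ (Matrix.of fun p q =>
          (⟨(A p q).re, (A p q).im, (B p q).re, -(B p q).im⟩ : Quaternion ℝ)) =
        Matrix.fromBlocks A (-(B.map (starRingEnd ℂ))) B (A.map (starRingEnd ℂ))) :
    let Sdet : Matrix (Fin n) (Fin n) (Quaternion ℝ) → ℝ :=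
      fun Z => Complex.normSq ((σ Z).det)
    (∀ Z, ((σ Z).det).im = 0 ∧ 0 ≤ ((σ Z).det).re) ∧
      Sdet 1 = 1 ∧
      (∀ Z W, Sdet (Z * W) = Sdet Z * Sdet W) ∧
      (∀ Z, IsUnit Z → 0 < Sdet Z) ∧
      (∀ r : ℝ, 0 < r → ∃ Z, IsUnit Z ∧ Sdet Z = r) := by
  intro Sdet
  have hσ_eq (Z : Matrix (Fin n) (Fin n) ℍ[ℝ]) : σ Z = symplecticRep Z := by
    convert hσ (Z.map coeffA) (Z.map coeffB) using 2
    · ext i j : 1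
      exact (mk_coeffA_coeffB _).symm
    · rfl
  refine ⟨fun Z => ?_, by simp [Sdet], fun Z W => by simp [Sdet, det_mul], fun Z hZ => ?_,
    fun r hr => ?_⟩
  · obtain ⟨hre, him⟩ := Complex.nonneg_iff.1 (hσ_eq Z ▸ det_symplecticRep_nonneg Z)
    exact ⟨him.symm, hre⟩
  · exact Complex.normSq_pos.2 ((isUnit_iff_isUnit_det _).1 (hZ.map σ)).ne_zero
  · set t := r ^ ((4 * n : ℕ) : ℝ)⁻¹
    have ht : 0 < t := Real.rpow_pos_of_pos hr _
    refine ⟨algebraMap ℝ _ t, (isUnit_iff_ne_zero.2 ht.ne').map _, ?_⟩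
    show Complex.normSq (σ (algebraMap ℝ _ t)).det = r
    rw [AlgHom.commutes, algebraMap_eq_diagonal, det_diagonal]
    simp only [Pi.algebraMap_apply, Complex.coe_algebraMap, Finset.prod_const, map_pow,
      Complex.normSq_ofReal, Finset.card_univ, Fintype.card_sum, Fintype.card_fin]
    calc (t * t) ^ (n + n) = t ^ (4 * n) := by ring
      _ = r := Real.rpow_inv_natCast_pow hr.le (by omega)

/-- For `Z ∈ Mat(n, ℍ)`, the complex determinant of the symplectic image `σ(Z)` is a
nonnegative real number; consequently the Study determinant
`S.det(Z) := |det σ(Z)|²` is a monoid homomorphism `Mat(n,ℍ) → ℝ≥0` whose restriction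
to `GL(n,ℍ)` is a group homomorphism onto the positive reals. -/
theorem study_determinant
    (n : ℕ) (hn : 1 ≤ n)
    (σ : Matrix (Fin n) (Fin n) (Quaternion ℝ) →ₐ[ℝ]
      Matrix (Fin n ⊕ Fin n) (Fin n ⊕ Fin n) ℂ)
    (hσinj : Function.Injective σ)
    (hσ : ∀ A B : Matrix (Fin n) (Fin n) ℂ,
      σ (Matrix.of fun p q =>
          (⟨(A p q).re, (A p q).im, (B p q).re, -(B p q).im⟩ : Quaternion ℝ)) =
        Matrix.fromBlocks A (-(B.map (starRingEnd ℂ))) B (A.map (starRingEnd ℂ))) :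
    let Sdet : Matrix (Fin n) (Fin n) (Quaternion ℝ) → ℝ :=
      fun Z => Complex.normSq ((σ Z).det)
    (∀ Z, ((σ Z).det).im = 0 ∧ 0 ≤ ((σ Z).det).re) ∧
      Sdet 1 = 1 ∧
      (∀ Z W, Sdet (Z * W) = Sdet Z * Sdet W) ∧
      (∀ Z, IsUnit Z → 0 < Sdet Z) ∧
      (∀ r : ℝ, 0 < r → ∃ Z, IsUnit Z ∧ Sdet Z = r) :=
  study_determinant_general n hn σ hσ
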